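/- arXiv:2001.01288 — 2 statements merged into one kernel-verified Lean document; each statement's English description precedes it below -/
import Mathlib

section
/- Let γ : [0,∞) → ℝ be C² with γ > 0, γ' ≤ 0, lim_{s→∞} γ(s) = 0, and 2(γ'(s))² ≤ γ(s)·γ''(s) for all s > 0. Then for every k > 1, lim_{s→∞} s^k·γ(s) = +∞. -/
/-!
The reciprocal `f = 1 / γ` satisfies `f'' = (2 γ'² - γ γ'') / γ³ ≤ 0`, so it is concave on
`[0, ∞)`. Since `f 0 > 0`, concavity forces `f s / s` to be non-increasing, hence
`f s ≤ f 1 * s` for `s ≥ 1`, i.e. `γ s ≥ γ 1 / s`. Therefore `s ^ k * γ s ≥ γ 1 * s ^ (k - 1)`,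
which tends to infinity when `k > 1`.
-/

open Filter Set

theorem concaveOn_inv_of_two_mul_deriv_sq_le {γ : ℝ → ℝ} (hγ : ContDiff ℝ 2 γ) {D : Set ℝ}
    (hD : Convex ℝ D) (hpos : ∀ x ∈ D, 0 < γ x)
    (h : ∀ x ∈ interior D, 2 * deriv γ x ^ 2 ≤ γ x * deriv (deriv γ) x) :
    ConcaveOn ℝ D fun x => (γ x)⁻¹ := by
  have hγ₁ : Differentiable ℝ γ := hγ.differentiable (by norm_num)
  have hγ₂ : Differentiable ℝ (deriv γ) :=
    (contDiff_succ_iff_deriv.mp (show ContDiff ℝ (1 + 1) γ from hγ)).2.2.differentiable one_ne_zero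
  have hne : ∀ x ∈ interior D, γ x ≠ 0 := fun x hx => (hpos x (interior_subset hx)).ne'
  refine concaveOn_of_hasDerivWithinAt2_nonpos hD
    (hγ₁.continuous.continuousOn.inv₀ fun x hx => (hpos x hx).ne')
    (f' := fun x => -deriv γ x / γ x ^ 2)
    (f'' := fun x => (-deriv (deriv γ) x * γ x ^ 2 - -deriv γ x * (2 * γ x * deriv γ x))
      / (γ x ^ 2) ^ 2)
    (fun x hx => ((hγ₁ x).hasDerivAt.inv (hne x hx)).hasDerivWithinAt)
    (fun x hx => ?_) (fun x hx => ?_)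
  · have hsq : HasDerivAt (fun t => γ t ^ 2) (2 * γ x * deriv γ x) x := by
      simpa using (hγ₁ x).hasDerivAt.fun_pow 2
    exact ((hγ₂ x).hasDerivAt.neg.div hsq (pow_ne_zero 2 (hne x hx))).hasDerivWithinAt
  · have hγx := hpos x (interior_subset hx)
    have hA := h x hx
    apply div_nonpos_of_nonpos_of_nonneg _ (by positivity)
    nlinarith

theorem ConcaveOn.antitoneOn_div_self {f : ℝ → ℝ} (hf : ConcaveOn ℝ (Ici 0) f) (h₀ : 0 ≤ f 0) :
    AntitoneOn (fun x => f x / x) (Ioi 0) := by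
  intro x (hx : 0 < x) y (hy : 0 < y) hxy
  have hxy' : x / y ≤ 1 := (div_le_one hy).mpr hxy
  have hconc := hf.2 (mem_Ici.mpr le_rfl) (mem_Ici.mpr hy.le) (sub_nonneg.mpr hxy')
    (div_pos hx hy).le (sub_add_cancel 1 (x / y))
  simp only [smul_eq_mul, mul_zero, zero_add, div_mul_cancel₀ x hy.ne'] at hconc
  rw [div_le_div_iff₀ hy hx]
  have : (x / y) * f y * y = x * f y := by field_simp
  nlinarith [mul_nonneg (sub_nonneg.mpr hxy') h₀]

theorem tendsto_rpow_mul_atTop_of_div_le {g : ℝ → ℝ} {c k : ℝ} (hk : 1 < k) (hc : 0 < c)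
    (h : ∀ᶠ s in atTop, c / s ≤ g s) : Tendsto (fun s => s ^ k * g s) atTop atTop := by
  refine tendsto_atTop_mono' atTop ?_
    ((tendsto_rpow_atTop (sub_pos.mpr hk)).const_mul_atTop hc)
  filter_upwards [h, eventually_gt_atTop 0] with s hs hs₀
  calc c * s ^ (k - 1) = s ^ k * (c / s) := by
        rw [Real.rpow_sub hs₀, Real.rpow_one]; ring
    _ ≤ s ^ k * g s := mul_le_mul_of_nonneg_left hs (Real.rpow_nonneg hs₀.le k)

theorem stmt_7_general (γ : ℝ → ℝ) (hC2 : ContDiff ℝ 2 γ)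
    (hpos : ∀ s, 0 ≤ s → 0 < γ s)
    (hA3 : ∀ s, 0 < s → 2 * (deriv γ s) ^ 2 ≤ γ s * deriv (deriv γ) s) :
    ∀ k : ℝ, 1 < k → Tendsto (fun s : ℝ => s ^ k * γ s) atTop atTop := by
  intro k hk
  have hconc : ConcaveOn ℝ (Ici 0) fun s => (γ s)⁻¹ :=
    concaveOn_inv_of_two_mul_deriv_sq_le hC2 (convex_Ici 0) hpos
      (fun s hs => hA3 s (by rwa [interior_Ici] at hs))
  have hanti := hconc.antitoneOn_div_self (inv_nonneg.mpr (hpos 0 le_rfl).le)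
  refine tendsto_rpow_mul_atTop_of_div_le hk (hpos 1 zero_le_one) ?_
  filter_upwards [eventually_ge_atTop 1] with s hs
  have hs₀ : (0 : ℝ) < s := zero_lt_one.trans_le hs
  have hbound : (γ s)⁻¹ / s ≤ (γ 1)⁻¹ / 1 := hanti (mem_Ioi.mpr zero_lt_one) (mem_Ioi.mpr hs₀) hs
  rw [div_one, div_eq_mul_inv, ← mul_inv, inv_le_inv₀ (mul_pos (hpos s hs₀.le) hs₀)
    (hpos 1 zero_le_one)] at hbound
  rwa [div_le_iff₀ hs₀]

theorem stmt_7 (γ : ℝ → ℝ) (hC2 : ContDiff ℝ 2 γ)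
    (hpos : ∀ s, 0 ≤ s → 0 < γ s) (hder : ∀ s, 0 ≤ s → deriv γ s ≤ 0)
    (hlim : Tendsto γ atTop (nhds 0))
    (hA3 : ∀ s, 0 < s → 2 * (deriv γ s) ^ 2 ≤ γ s * deriv (deriv γ) s) :
    ∀ k : ℝ, 1 < k → Tendsto (fun s : ℝ => s ^ k * γ s) atTop atTop :=
  stmt_7_general γ hC2 hpos hA3
end

section
/- Let y, g, h be positive locally integrable functions on (t₀,∞) with y absolutely continuous, satisfying y'(t) ≤ g(t)·y(t) + h(t) for all t ≥ t₀. Suppose there are positive constants r, a₁, a₂, a₃ such that for all t ≥ t₀, ∫_t^{t+r} g ≤ a₁, ∫_t^{t+r} h ≤ a₂, and ∫_t^{t+r} y ≤ a₃. Then for all t ≥ t₀, y(t + r) ≤ (a₃/r + a₂)·e^{a₁}. -/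
/-!
If `y ≤ K + ∫_a^x g y` with `g ≥ 0`, then `(K + ∫_a^x g y) e^{-∫_a^x g}` is absolutely continuous
with almost everywhere nonpositive derivative, hence `y b ≤ K e^{∫_a^b g}`; the differential
inequality `y' ≤ g y + h` puts `y` in this situation with `K = y a + ∫_a^b h`. For the uniform
bound, `y` is at most its mean `a₃ / r` at some `s ∈ (t, t + r]`, and the estimate on
`[s, t + r] ⊆ [s, s + r]` has `∫ g ≤ a₁` and `∫ h ≤ a₂`.
-/

open MeasureTheory Set

theorem LipschitzOnWith.comp_absolutelyContinuousOnInterval {X Y : Type*} [PseudoMetricSpace X]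
    [PseudoMetricSpace Y] {φ : X → Y} {K : NNReal} {s : Set X} {f : ℝ → X} {a b : ℝ}
    (hφ : LipschitzOnWith K φ s) (hf : AbsolutelyContinuousOnInterval f a b)
    (hfs : MapsTo f (uIcc a b) s) : AbsolutelyContinuousOnInterval (φ ∘ f) a b := by
  rw [absolutelyContinuousOnInterval_iff] at hf ⊢
  intro ε hε
  obtain ⟨δ, hδ, hfδ⟩ := hf (ε / (K + 1)) (by positivity)
  refine ⟨δ, hδ, fun E hE hEδ => ?_⟩
  calc ∑ i ∈ Finset.range E.1, dist (φ (f (E.2 i).1)) (φ (f (E.2 i).2))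
      ≤ ∑ i ∈ Finset.range E.1, K * dist (f (E.2 i).1) (f (E.2 i).2) :=
        Finset.sum_le_sum fun i hi =>
          hφ.dist_le_mul _ (hfs (hE.1 i hi).1) _ (hfs (hE.1 i hi).2)
    _ = K * ∑ i ∈ Finset.range E.1, dist (f (E.2 i).1) (f (E.2 i).2) := (Finset.mul_sum ..).symm
    _ ≤ K * (ε / (K + 1)) := by gcongr; exact (hfδ E hE hEδ).le
    _ < ε := by
      rw [mul_div_assoc', div_lt_iff₀ (by positivity)]
      nlinarith

theorem ContDiff.comp_absolutelyContinuousOnInterval {φ f : ℝ → ℝ} {a b : ℝ}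
    (hφ : ContDiff ℝ 1 φ) (hf : AbsolutelyContinuousOnInterval f a b) :
    AbsolutelyContinuousOnInterval (fun x => φ (f x)) a b := by
  obtain ⟨C, hC⟩ := hf.exists_bound
  obtain ⟨K, hK⟩ := hφ.contDiffOn.exists_lipschitzOnWith one_ne_zero (convex_Icc (-C) C)
    isCompact_Icc
  exact hK.comp_absolutelyContinuousOnInterval hf fun x hx => abs_le.1 (hC x hx)

theorem le_mul_exp_integral_of_le_add_integral_mul {y g : ℝ → ℝ} {a b K : ℝ} (hab : a ≤ b)
    (hy : ContinuousOn y (Icc a b)) (hg : IntervalIntegrable g volume a b)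
    (hg0 : ∀ x ∈ Icc a b, 0 ≤ g x)
    (hle : ∀ x ∈ Icc a b, y x ≤ K + ∫ t in a..x, g t * y t) :
    y b ≤ K * Real.exp (∫ t in a..b, g t) := by
  set u := fun x => ∫ t in a..x, g t * y t
  set G := fun x => ∫ t in a..x, g t
  have hgy : IntervalIntegrable (fun t => g t * y t) volume a b :=
    hg.mul_continuousOn (by rwa [uIcc_of_le hab])
  have hu : AbsolutelyContinuousOnInterval u a b :=
    hgy.absolutelyContinuousOnInterval_intervalIntegral left_mem_uIcc
  have hE : AbsolutelyContinuousOnInterval (fun x => Real.exp (-G x)) a b :=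
    Real.contDiff_exp.comp_absolutelyContinuousOnInterval
      (hg.absolutelyContinuousOnInterval_intervalIntegral left_mem_uIcc).fun_neg
  set F := fun x => (K + u x) * Real.exp (-G x)
  have hF : AbsolutelyContinuousOnInterval F a b := by
    have hFeq : F = fun x => K * Real.exp (-G x) + u x * Real.exp (-G x) :=
      funext fun x => add_mul _ _ _
    rw [hFeq]
    exact (hE.const_mul K).fun_add (hu.fun_mul hE)
  have hF' : ∀ᵐ x, x ∈ Ioc a b → deriv F x ≤ 0 := by
    filter_upwards [hg.ae_hasDerivAt_integral, hgy.ae_hasDerivAt_integral] with x hG hu hx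
    have hx' : x ∈ Icc a b := Ioc_subset_Icc_self hx
    have hxu : x ∈ uIcc a b := by rwa [uIcc_of_le hab]
    have hFx : HasDerivAt F (g x * Real.exp (-G x) * (y x - (K + u x))) x := by
      refine (((hu hxu a left_mem_uIcc).const_add K).fun_mul
        (hG hxu a left_mem_uIcc).fun_neg.exp).congr_deriv ?_
      simp only [u, G]
      ring
    rw [hFx.deriv]
    have hyx : y x ≤ K + u x := hle x hx'
    exact mul_nonpos_of_nonneg_of_nonpos (by have := hg0 x hx'; positivity) (by linarith)
  have hFb : F b ≤ F a := by
    have hint : ∫ x in a..b, deriv F x ≤ 0 := by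
      rw [intervalIntegral.integral_of_le hab]
      exact setIntegral_nonpos_ae measurableSet_Ioc hF'
    linarith [hF.integral_deriv_eq_sub]
  calc y b ≤ K + u b := hle b (right_mem_Icc.2 hab)
    _ = F b * Real.exp (G b) := by
      simp only [F]
      rw [mul_assoc, ← Real.exp_add, neg_add_cancel, Real.exp_zero, mul_one]
    _ ≤ F a * Real.exp (G b) := by gcongr
    _ = K * Real.exp (G b) := by simp [F, u, G]

theorem le_add_integral_mul_of_deriv_le {y g h : ℝ → ℝ} {a b : ℝ} (hab : a ≤ b)
    (hy : ∀ x ∈ Icc a b, DifferentiableAt ℝ y x)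
    (hineq : ∀ x ∈ Ioo a b, deriv y x ≤ g x * y x + h x)
    (hg : IntervalIntegrable g volume a b) (hh : IntervalIntegrable h volume a b)
    (hh0 : ∀ x ∈ Icc a b, 0 ≤ h x) :
    ∀ x ∈ Icc a b, y x ≤ (y a + ∫ t in a..b, h t) + ∫ t in a..x, g t * y t := by
  intro x hx
  have hsub : uIcc a x ⊆ uIcc a b := uIcc_subset_uIcc_left (by rwa [uIcc_of_le hab])
  have hIcc : Icc a x ⊆ Icc a b := Icc_subset_Icc_right hx.2
  have hycont : ContinuousOn y (Icc a x) := fun t ht =>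
    (hy t (hIcc ht)).continuousAt.continuousWithinAt
  have hgy : IntervalIntegrable (fun t => g t * y t) volume a x :=
    (hg.mono_set hsub).mul_continuousOn (by rwa [uIcc_of_le hx.1])
  have hhx : IntervalIntegrable h volume a x := hh.mono_set hsub
  have hFTC : y x - y a ≤ ∫ t in a..x, (g t * y t + h t) := by
    refine intervalIntegral.sub_le_integral_of_hasDeriv_right_of_le hx.1 hycont
      (fun t ht => (hy t (hIcc (Ioo_subset_Icc_self ht))).hasDerivAt.hasDerivWithinAt)
      ((intervalIntegrable_iff_integrableOn_Icc_of_le hx.1).1 (hgy.add hhx))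
      (fun t ht => hineq t ⟨ht.1, ht.2.trans_le hx.2⟩)
  have hhle : ∫ t in a..x, h t ≤ ∫ t in a..b, h t :=
    intervalIntegral.integral_mono_interval le_rfl hx.1 hx.2
      ((ae_restrict_iff' measurableSet_Ioc).2
        (ae_of_all _ fun t ht => hh0 t (Ioc_subset_Icc_self ht))) hh
  rw [intervalIntegral.integral_add hgy hhx] at hFTC
  linarith

theorem le_mul_exp_integral_of_deriv_le {y g h : ℝ → ℝ} {a b : ℝ} (hab : a ≤ b)
    (hy : ∀ x ∈ Icc a b, DifferentiableAt ℝ y x)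
    (hineq : ∀ x ∈ Ioo a b, deriv y x ≤ g x * y x + h x)
    (hg : IntervalIntegrable g volume a b) (hh : IntervalIntegrable h volume a b)
    (hg0 : ∀ x ∈ Icc a b, 0 ≤ g x) (hh0 : ∀ x ∈ Icc a b, 0 ≤ h x) :
    y b ≤ (y a + ∫ t in a..b, h t) * Real.exp (∫ t in a..b, g t) :=
  le_mul_exp_integral_of_le_add_integral_mul hab
    (fun x hx => (hy x hx).continuousAt.continuousWithinAt) hg hg0
    (le_add_integral_mul_of_deriv_le hab hy hineq hg hh hh0)

theorem exists_mem_Ioc_le_div_of_integral_le {f : ℝ → ℝ} {a b c : ℝ} (hab : a < b)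
    (hf : IntervalIntegrable f volume a b) (hc : ∫ x in a..b, f x ≤ c) :
    ∃ x ∈ Ioc a b, f x ≤ c / (b - a) := by
  obtain ⟨x, hx, hfx⟩ := exists_le_setAverage (s := Ioc a b) (μ := volume) (by simp [hab])
    (by simp) hf.1
  refine ⟨x, hx, hfx.trans ?_⟩
  rw [← uIoc_of_le hab.le, interval_average_eq_div]
  gcongr

theorem stmt_8 (t₀ r a₁ a₂ a₃ : ℝ) (hr : 0 < r)
    (y g h : ℝ → ℝ)
    (hy_pos : ∀ t, t₀ < t → 0 < y t) (hg_pos : ∀ t, t₀ < t → 0 < g t)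
    (hh_pos : ∀ t, t₀ < t → 0 < h t)
    (hy_diff : ∀ t, t₀ ≤ t → DifferentiableAt ℝ y t)
    (hineq : ∀ t, t₀ ≤ t → deriv y t ≤ g t * y t + h t)
    (hg_int : ∀ t, t₀ ≤ t → IntervalIntegrable g volume t (t + r))
    (hh_int : ∀ t, t₀ ≤ t → IntervalIntegrable h volume t (t + r))
    (hy_int : ∀ t, t₀ ≤ t → IntervalIntegrable y volume t (t + r))
    (hga : ∀ t, t₀ ≤ t → (∫ s in t..t + r, g s) ≤ a₁)
    (hha : ∀ t, t₀ ≤ t → (∫ s in t..t + r, h s) ≤ a₂)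
    (hya : ∀ t, t₀ ≤ t → (∫ s in t..t + r, y s) ≤ a₃) :
    ∀ t, t₀ ≤ t → y (t + r) ≤ (a₃ / r + a₂) * Real.exp a₁ := by
  intro t ht
  obtain ⟨s, hs, hys⟩ := exists_mem_Ioc_le_div_of_integral_le (lt_add_of_pos_right t hr)
    (hy_int t ht) (hya t ht)
  rw [add_sub_cancel_left] at hys
  have hts₀ : t₀ < s := ht.trans_lt hs.1
  have hsb : s ≤ t + r := hs.2
  have hbsr : t + r ≤ s + r := by linarith [hs.1]
  have hsub : uIcc s (t + r) ⊆ uIcc s (s + r) := by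
    rw [uIcc_of_le hsb, uIcc_of_le (by linarith)]
    exact Icc_subset_Icc_right hbsr
  have hpos : ∀ {f : ℝ → ℝ}, (∀ t, t₀ < t → 0 < f t) → ∀ x ∈ Icc s (s + r), 0 ≤ f x :=
    fun hf x hx => (hf x (hts₀.trans_le hx.1)).le
  have hintegral_le : ∀ {f : ℝ → ℝ}, (∀ t, t₀ < t → 0 < f t) →
      IntervalIntegrable f volume s (s + r) → ∫ x in s..t + r, f x ≤ ∫ x in s..s + r, f x :=
    fun hf hfi => intervalIntegral.integral_mono_interval le_rfl hsb hbsr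
      ((ae_restrict_iff' measurableSet_Ioc).2
        (ae_of_all _ fun x hx => hpos hf x (Ioc_subset_Icc_self hx))) hfi
  calc y (t + r)
      ≤ (y s + ∫ x in s..t + r, h x) * Real.exp (∫ x in s..t + r, g x) :=
        le_mul_exp_integral_of_deriv_le hsb (fun x hx => hy_diff x (hts₀.le.trans hx.1))
          (fun x hx => hineq x (hts₀.le.trans hx.1.le)) ((hg_int s hts₀.le).mono_set hsub)
          ((hh_int s hts₀.le).mono_set hsub)
          (fun x hx => hpos hg_pos x ⟨hx.1, hx.2.trans hbsr⟩)
          (fun x hx => hpos hh_pos x ⟨hx.1, hx.2.trans hbsr⟩)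
    _ ≤ (a₃ / r + a₂) * Real.exp a₁ := by
      have hH := (hintegral_le hh_pos (hh_int s hts₀.le)).trans (hha s hts₀.le)
      have hG := (hintegral_le hg_pos (hg_int s hts₀.le)).trans (hga s hts₀.le)
      have hH0 : 0 ≤ ∫ x in s..t + r, h x :=
        intervalIntegral.integral_nonneg hsb fun x hx => hpos hh_pos x ⟨hx.1, hx.2.trans hbsr⟩
      have hy0 := hy_pos s hts₀
      gcongr
      linarith
end
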